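/- arXiv:1101.3041 — 9 statements merged into one kernel-verified Lean document; each statement's English description precedes it below -/
import Mathlib

section
/- Let θ ∈ ℝ with tan θ irrational, and let a, b, d be integers with gcd(a, b, d) = 1 and d ≠ 0. Then the set {(am + bn mod d, m·sin θ + n·cos θ) : m, n ∈ ℤ} is dense in (ℤ/dℤ) × ℝ. -/
/-!
Since `tan θ = d sin θ / (d cos θ)` is irrational, the subgroup `ℤ (d sin θ) + ℤ (d cos θ)` of `ℝ`
is not cyclic, hence dense. By Bézout some `(m₀, n₀)` hits the residue `r`, and shifting it by
`d (u, v)` keeps the residue while moving `m sin θ + n cos θ` by an arbitrary element of that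
dense subgroup.
-/

theorem dense_closure_pair_of_irrational_div {p q : ℝ} (h : Irrational (p / q)) :
    Dense (AddSubgroup.closure {p, q} : Set ℝ) := by
  refine (AddSubgroup.dense_or_cyclic _).resolve_right ?_
  rintro ⟨g, hg⟩
  have hp : p ∈ AddSubgroup.closure ({p, q} : Set ℝ) := AddSubgroup.subset_closure (by simp)
  have hq : q ∈ AddSubgroup.closure ({p, q} : Set ℝ) := AddSubgroup.subset_closure (by simp)
  rw [hg, AddSubgroup.mem_closure_singleton] at hp hq
  obtain ⟨u, rfl⟩ := hp
  obtain ⟨v, rfl⟩ := hq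
  apply h
  by_cases hg0 : g = 0
  · exact ⟨0, by simp [hg0]⟩
  · exact ⟨u / v, by push_cast [zsmul_eq_mul]; rw [mul_div_mul_right _ _ hg0]⟩

theorem exists_abs_intCast_mul_add_intCast_mul_sub_lt {p q : ℝ} (h : Irrational (p / q))
    (y : ℝ) {ε : ℝ} (hε : 0 < ε) : ∃ u v : ℤ, |u * p + v * q - y| < ε := by
  obtain ⟨x, hxy, hx⟩ := Metric.dense_iff.mp (dense_closure_pair_of_irrational_div h) y ε hε
  obtain ⟨u, v, rfl⟩ := AddSubgroup.mem_closure_pair.mp hx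
  refine ⟨u, v, ?_⟩
  simpa [zsmul_eq_mul, Real.dist_eq] using hxy

theorem Int.exists_mul_add_mul_emod_eq {a b d : ℤ} (hg : Int.gcd a (Int.gcd b d) = 1) (r : ℤ) :
    ∃ m n : ℤ, (a * m + b * n) % d = r % d := by
  set g : ℤ := (Int.gcd b d : ℤ)
  have h₁ : 1 = a * Int.gcdA a g + g * Int.gcdB a g := by
    rw [← Int.gcd_eq_gcd_ab, hg, Nat.cast_one]
  have h₂ : g = b * Int.gcdA b d + d * Int.gcdB b d := Int.gcd_eq_gcd_ab b d
  refine ⟨Int.gcdA a g * r, Int.gcdA b d * Int.gcdB a g * r, ?_⟩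
  rw [show a * (Int.gcdA a g * r) + b * (Int.gcdA b d * Int.gcdB a g * r)
      = r + d * (-(Int.gcdB b d * Int.gcdB a g * r)) by
    linear_combination (-r) * h₁ + (-(Int.gcdB a g * r)) * h₂,
    Int.add_mul_emod_self_left]

theorem stmt0 (θ : ℝ) (hθ : Irrational (Real.tan θ))
    (a b d : ℤ) (hd : d ≠ 0) (hg : Int.gcd a (Int.gcd b d) = 1) :
    ∀ r : ℤ, ∀ y : ℝ, ∀ ε : ℝ, 0 < ε →
      ∃ m n : ℤ, (a * m + b * n) % d = r % d ∧
        |(m : ℝ) * Real.sin θ + (n : ℝ) * Real.cos θ - y| < ε := by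
  intro r y ε hε
  obtain ⟨m₀, n₀, hmn⟩ := Int.exists_mul_add_mul_emod_eq hg r
  have hdθ : Irrational (d * Real.sin θ / (d * Real.cos θ)) := by
    rwa [mul_div_mul_left _ _ (Int.cast_ne_zero.mpr hd), ← Real.tan_eq_sin_div_cos]
  obtain ⟨u, v, huv⟩ := exists_abs_intCast_mul_add_intCast_mul_sub_lt hdθ
    (y - m₀ * Real.sin θ - n₀ * Real.cos θ) hε
  refine ⟨m₀ + d * u, n₀ + d * v, ?_, ?_⟩
  · rw [← hmn, show a * (m₀ + d * u) + b * (n₀ + d * v) = a * m₀ + b * n₀ + d * (a * u + b * v)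
      by ring, Int.add_mul_emod_self_left]
  · convert huv using 2
    push_cast
    ring
end

section
/- Let θ ∈ ℝ with tan θ irrational, ε > 0, and define Λ_F = {m·cos θ − n·sin θ : m, n ∈ ℤ, 0 ≤ m·sin θ + n·cos θ < ε}. Then Λ_F is a discrete subset of ℝ (i.e., it has no accumulation point in ℝ). -/
open Bornology

/-
A rotation of the plane preserves `m² + n²`, so the integer points whose rotated image lies in a
bounded box `U × W` form a bounded, hence finite, subset of `ℤ²`. The points of `Λ_F` near `x`
are projections of such lattice points, with `U` a ball around `x` and `W = [0, ε)`.
-/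

lemma Int.finite_setOf_sq_add_sq_le (R : ℝ) :
    {p : ℤ × ℤ | (p.1 : ℝ) ^ 2 + (p.2 : ℝ) ^ 2 ≤ R}.Finite := by
  refine ((Set.finite_Icc (-⌊R⌋) ⌊R⌋).prod (Set.finite_Icc (-⌊R⌋) ⌊R⌋)).subset ?_
  rintro ⟨m, n⟩ (h : (m : ℝ) ^ 2 + (n : ℝ) ^ 2 ≤ R)
  have self_le_sq (k : ℤ) : (k : ℝ) ≤ k ^ 2 ∧ -(k : ℝ) ≤ k ^ 2 := by
    constructor
    · exact_mod_cast Int.le_self_sq k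
    · simpa using (Int.cast_le (R := ℝ)).2 (Int.le_self_sq (-k))
  have hm := self_le_sq m
  have hn := self_le_sq n
  simp only [Set.mem_prod, Set.mem_Icc, neg_le, Int.le_floor]
  push_cast
  refine ⟨⟨?_, ?_⟩, ?_, ?_⟩ <;> nlinarith

lemma rotate_sq_add_sq (θ a b : ℝ) :
    (a * Real.cos θ - b * Real.sin θ) ^ 2 + (a * Real.sin θ + b * Real.cos θ) ^ 2 = a ^ 2 + b ^ 2 := by
  linear_combination (a ^ 2 + b ^ 2) * Real.sin_sq_add_cos_sq θ

lemma finite_setOf_rotate_mem (θ : ℝ) {U W : Set ℝ} (hU : IsBounded U) (hW : IsBounded W) :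
    {p : ℤ × ℤ | (p.1 : ℝ) * Real.cos θ - (p.2 : ℝ) * Real.sin θ ∈ U ∧
      (p.1 : ℝ) * Real.sin θ + (p.2 : ℝ) * Real.cos θ ∈ W}.Finite := by
  obtain ⟨C, hC⟩ := hU.exists_norm_le
  obtain ⟨D, hD⟩ := hW.exists_norm_le
  refine (Int.finite_setOf_sq_add_sq_le (C ^ 2 + D ^ 2)).subset ?_
  rintro ⟨m, n⟩ ⟨hu, hw⟩
  have hu' := sq_le_sq' (abs_le.1 (hC _ hu)).1 (abs_le.1 (hC _ hu)).2
  have hw' := sq_le_sq' (abs_le.1 (hD _ hw)).1 (abs_le.1 (hD _ hw)).2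
  show (m : ℝ) ^ 2 + (n : ℝ) ^ 2 ≤ C ^ 2 + D ^ 2
  rw [← rotate_sq_add_sq θ]
  exact add_le_add hu' hw'

theorem stmt2_general (θ : ℝ) (ε : ℝ) :
    ∀ x : ℝ, ∃ U ∈ nhds x,
      (U ∩ {x : ℝ | ∃ m n : ℤ, x = (m : ℝ) * Real.cos θ - (n : ℝ) * Real.sin θ ∧
        0 ≤ (m : ℝ) * Real.sin θ + (n : ℝ) * Real.cos θ ∧
        (m : ℝ) * Real.sin θ + (n : ℝ) * Real.cos θ < ε}).Finite := by
  intro x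
  refine ⟨Metric.ball x 1, Metric.ball_mem_nhds x one_pos, ?_⟩
  refine ((finite_setOf_rotate_mem θ (Metric.isBounded_ball (x := x) (r := 1))
    (Metric.isBounded_Ico 0 ε)).image
      fun p : ℤ × ℤ => (p.1 : ℝ) * Real.cos θ - (p.2 : ℝ) * Real.sin θ).subset ?_
  rintro _ ⟨hy, m, n, rfl, h0, hε⟩
  exact ⟨(m, n), ⟨hy, h0, hε⟩, rfl⟩

theorem stmt2 (θ : ℝ) (hθ : Irrational (Real.tan θ)) (ε : ℝ) (hε : 0 < ε) :
    ∀ x : ℝ, ∃ U ∈ nhds x,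
      (U ∩ {x : ℝ | ∃ m n : ℤ, x = (m : ℝ) * Real.cos θ - (n : ℝ) * Real.sin θ ∧
        0 ≤ (m : ℝ) * Real.sin θ + (n : ℝ) * Real.cos θ ∧
        (m : ℝ) * Real.sin θ + (n : ℝ) * Real.cos θ < ε}).Finite :=
  stmt2_general θ ε
end

section
/- Let θ ∈ ℝ with tan θ irrational, ε > 0, and Λ_F = {m·cos θ − n·sin θ : m, n ∈ ℤ, 0 ≤ m·sin θ + n·cos θ < ε}. Then Λ_F is relatively dense in ℝ: there exists R > 0 such that every interval of length R contains a point of Λ_F. -/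
/-!
Write `X` and `Y` for the two coordinates of the rotated lattice. Since `tan θ` is irrational,
the internal coordinates `Y` form a dense subgroup of `ℝ`, so some lattice vector `w` has
`0 < Y w < ε`. Subtracting the right multiple of `w` moves any lattice vector `a` into the strip
`0 ≤ Y < Y w`, and the result has `X` within `|X w|` of the sheared coordinate
`X a - (Y a / Y w) * X w`. The sheared coordinate is a nonzero additive map (the rotation is
invertible), so its values on the multiples of a suitable `e` are relatively dense in `ℝ`, and
hence so are the `X`-values of the reduced multiples.
-/

open Set

section Strip

variable {A : Type*} [AddGroup A] (X Y : A →+ ℝ) {w : A}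

theorem exists_sub_zsmul_mem_strip (hw : 0 < Y w) (a : A) :
    ∃ k : ℤ, 0 ≤ Y (a - k • w) ∧ Y (a - k • w) < Y w ∧
      |X (a - k • w) - (X a - Y a / Y w * X w)| ≤ |X w| := by
  set t := Y a / Y w
  have hY : Y (a - ⌊t⌋ • w) = Int.fract t * Y w := by
    rw [map_sub, map_zsmul, zsmul_eq_mul, Int.fract, sub_mul, div_mul_cancel₀ _ hw.ne']
  have hX : X (a - ⌊t⌋ • w) - (X a - t * X w) = Int.fract t * X w := by
    rw [map_sub, map_zsmul, zsmul_eq_mul, Int.fract]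
    ring
  refine ⟨⌊t⌋, ?_, ?_, ?_⟩
  · rw [hY]
    exact mul_nonneg (Int.fract_nonneg t) hw.le
  · rw [hY]
    exact mul_lt_of_lt_one_left hw (Int.fract_lt_one t)
  · rw [hX, abs_mul, abs_of_nonneg (Int.fract_nonneg t)]
    exact mul_le_of_le_one_left (abs_nonneg _) (Int.fract_lt_one t).le

theorem exists_pos_forall_exists_mem_strip_mem_Icc {e : A} (hw : 0 < Y w)
    (he : X e * Y w ≠ Y e * X w) :
    ∃ R : ℝ, 0 < R ∧ ∀ y : ℝ, ∃ a : A, 0 ≤ Y a ∧ Y a < Y w ∧ X a ∈ Icc y (y + R) := by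
  obtain ⟨f, hd⟩ : ∃ f : A, 0 < X f - Y f / Y w * X w := by
    have hd : X e - Y e / Y w * X w = (X e * Y w - Y e * X w) / Y w := by field_simp
    rcases (hd ▸ div_ne_zero (sub_ne_zero.mpr he) hw.ne').lt_or_gt with h | h
    · exact ⟨-e, by simp only [map_neg, neg_div, neg_mul]; linarith⟩
    · exact ⟨e, h⟩
  set d := X f - Y f / Y w * X w
  refine ⟨2 * |X w| + d, by positivity, fun y => ?_⟩
  set j := ⌈(y + |X w|) / d⌉
  have hj : j * d ∈ Ico (y + |X w|) (y + |X w| + d) := by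
    constructor
    · exact (div_le_iff₀ hd).mp (Int.le_ceil _)
    · have := mul_lt_mul_of_pos_right (Int.ceil_lt_add_one ((y + |X w|) / d)) hd
      rwa [add_mul, div_mul_cancel₀ _ hd.ne', one_mul] at this
  obtain ⟨k, hY₀, hYw, hX⟩ := exists_sub_zsmul_mem_strip X Y hw (j • f)
  have hshear : X (j • f) - Y (j • f) / Y w * X w = j * d := by
    simp only [map_zsmul, zsmul_eq_mul, d]
    ring
  rw [hshear, abs_le] at hX
  exact ⟨j • f - k • w, hY₀, hYw, by constructor <;> linarith [hj.1, hj.2]⟩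

end Strip

section RotatedLattice

open Real

noncomputable def rotatedLatticeFst (θ : ℝ) : ℤ × ℤ →+ ℝ :=
  AddMonoidHom.mk' (fun v => v.1 * cos θ - v.2 * sin θ) fun a b => by
    simp only [Prod.fst_add, Prod.snd_add, Int.cast_add]; ring

noncomputable def rotatedLatticeSnd (θ : ℝ) : ℤ × ℤ →+ ℝ :=
  AddMonoidHom.mk' (fun v => v.1 * sin θ + v.2 * cos θ) fun a b => by
    simp only [Prod.fst_add, Prod.snd_add, Int.cast_add]; ring

theorem exists_rotatedLatticeSnd_mem_Ioo {θ : ℝ} (hθ : Irrational (tan θ)) {ε : ℝ} (hε : 0 < ε) :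
    ∃ w, rotatedLatticeSnd θ w ∈ Ioo 0 ε := by
  rw [tan_eq_sin_div_cos, ← dense_addSubgroupClosure_pair_iff] at hθ
  obtain ⟨z, hz, hzε⟩ := hθ.exists_between hε
  obtain ⟨m, n, rfl⟩ := AddSubgroup.mem_closure_pair.mp hz
  exact ⟨(m, n), by simpa [rotatedLatticeSnd] using hzε⟩

theorem exists_rotatedLattice_cross_ne_zero (θ : ℝ) {w : ℤ × ℤ} (hw : rotatedLatticeSnd θ w ≠ 0) :
    ∃ e, rotatedLatticeFst θ e * rotatedLatticeSnd θ w ≠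
      rotatedLatticeSnd θ e * rotatedLatticeFst θ w := by
  by_contra! h
  have h₁ := h (1, 0)
  have h₂ := h (0, 1)
  set x := rotatedLatticeFst θ w
  set y := rotatedLatticeSnd θ w
  simp only [rotatedLatticeFst, rotatedLatticeSnd, AddMonoidHom.mk'_apply, Int.cast_one,
    Int.cast_zero, one_mul, zero_mul, sub_zero, add_zero, zero_sub, zero_add] at h₁ h₂
  exact hw (by linear_combination cos θ * h₁ - sin θ * h₂ - y * sin_sq_add_cos_sq θ)

end RotatedLattice

theorem stmt3 (θ : ℝ) (hθ : Irrational (Real.tan θ)) (ε : ℝ) (hε : 0 < ε) :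
    ∃ R : ℝ, 0 < R ∧ ∀ y : ℝ, ∃ m n : ℤ,
      0 ≤ (m : ℝ) * Real.sin θ + (n : ℝ) * Real.cos θ ∧
      (m : ℝ) * Real.sin θ + (n : ℝ) * Real.cos θ < ε ∧
      (m : ℝ) * Real.cos θ - (n : ℝ) * Real.sin θ ∈ Set.Icc y (y + R) := by
  obtain ⟨w, hw₀, hwε⟩ := exists_rotatedLatticeSnd_mem_Ioo hθ hε
  obtain ⟨e, he⟩ := exists_rotatedLattice_cross_ne_zero θ hw₀.ne'
  obtain ⟨R, hR, hdense⟩ :=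
    exists_pos_forall_exists_mem_strip_mem_Icc (rotatedLatticeFst θ) (rotatedLatticeSnd θ) hw₀ he
  refine ⟨R, hR, fun y => ?_⟩
  obtain ⟨⟨m, n⟩, h₀, hlt, hmem⟩ := hdense y
  exact ⟨m, n, h₀, hlt.trans hwε, hmem⟩
end

section
/- Let θ ∈ (0, π/2) with tan θ irrational, ε = cos θ + sin θ, and enumerate Λ_F = {x_j : j ∈ ℤ} in increasing order with x_0 = 0. Then for each j: if x_j* ∈ [0, cos θ) then x_{j+1} − x_j = cos θ and x_{j+1}* − x_j* = sin θ; and if x_j* ∈ [cos θ, cos θ + sin θ) then x_{j+1} − x_j = sin θ and x_{j+1}* − x_j* = −cos θ. -/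
/-!
Write a lattice vector `(p, q)` as `X = p c - q s` (physical) and `U = p s + q c` (internal),
with `c = cos θ`, `s = sin θ`. Since `tan θ` is irrational, `X` determines `(p, q)`. The
candidate successor of `x_j` is `x_j + c`, from `(m_j + 1, n_j)`, when `x_j* < c`, and `x_j + s`,
from `(m_j, n_j - 1)`, when `x_j* ≥ c`; in each case its star stays in the window. It remains to
see that no point of `Λ_F` lies strictly between `x_j` and the candidate, i.e. that no lattice
vector with `0 < X < c` (resp. `0 < X < s`) has `x_j* + U` in the window; a case split on the
signs of `p` and `q` rules this out.
-/

section LatticeStrip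

variable {c s : ℝ}

theorem Int.cast_one_le_of_mul_pos {p : ℤ} (hc : 0 < c) (h : 0 < (p : ℝ) * c) : (1 : ℝ) ≤ p :=
  Int.cast_one_le_of_pos (Int.cast_pos.mp (pos_of_mul_pos_left h hc.le))

theorem Int.cast_le_neg_one_of_mul_neg {p : ℤ} (hc : 0 < c) (h : (p : ℝ) * c < 0) :
    (p : ℝ) ≤ -1 :=
  Int.cast_le_neg_one_of_neg (Int.cast_lt_zero.mp (neg_of_mul_neg_left h hc.le))

theorem no_lattice_point_of_lt_cos (hc : 0 < c) (hs : 0 < s) (p q : ℤ)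
    (hX : 0 < (p : ℝ) * c - q * s) (hXc : (p : ℝ) * c - q * s < c)
    (hU : -c < (p : ℝ) * s + q * c) (hUc : (p : ℝ) * s + q * c < c + s) : False := by
  rcases lt_trichotomy q 0 with hq | rfl | hq
  · have hq : (q : ℝ) ≤ -1 := Int.cast_le_neg_one_of_neg hq
    have hp : (1 : ℝ) ≤ p := Int.cast_one_le_of_mul_pos hs (by nlinarith)
    nlinarith
  · simp only [Int.cast_zero, zero_mul, sub_zero, add_zero] at *
    have hp : (1 : ℝ) ≤ p := Int.cast_one_le_of_mul_pos hc hX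
    nlinarith
  · have hq : (1 : ℝ) ≤ q := Int.cast_one_le_of_pos hq
    have hp : (1 : ℝ) ≤ p := Int.cast_one_le_of_mul_pos hc (by nlinarith)
    nlinarith

theorem no_lattice_point_of_lt_sin (hc : 0 < c) (hs : 0 < s) (p q : ℤ)
    (hX : 0 < (p : ℝ) * c - q * s) (hXs : (p : ℝ) * c - q * s < s)
    (hU : -(c + s) < (p : ℝ) * s + q * c) (hUs : (p : ℝ) * s + q * c < s) : False := by
  rcases lt_trichotomy q 0 with hq | rfl | hq
  · have hq : (q : ℝ) ≤ -1 := Int.cast_le_neg_one_of_neg hq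
    have hp : (p : ℝ) ≤ -1 := Int.cast_le_neg_one_of_mul_neg hc (by nlinarith)
    nlinarith
  · simp only [Int.cast_zero, zero_mul, sub_zero, add_zero] at *
    have hp : (1 : ℝ) ≤ p := Int.cast_one_le_of_mul_pos hc hX
    nlinarith
  · have hq : (1 : ℝ) ≤ q := Int.cast_one_le_of_pos hq
    have hp : (1 : ℝ) ≤ p := Int.cast_one_le_of_mul_pos hc (by nlinarith)
    nlinarith

theorem int_mul_sub_int_mul_injective (hirr : Irrational (s / c)) :
    Function.Injective fun v : ℤ × ℤ => (v.1 : ℝ) * c - v.2 * s := by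
  rintro ⟨a, b⟩ ⟨a', b'⟩ h
  simp only at h
  have hc : c ≠ 0 := by
    rintro rfl
    exact hirr ⟨0, by simp⟩
  by_cases hb : b = b'
  · subst hb
    have ha : (a : ℝ) = a' := mul_right_cancel₀ hc (by linarith)
    rw [Int.cast_inj.mp ha]
  · refine (hirr.ne_rat ((a - a') / (b - b')) ?_).elim
    have hbb : (b : ℝ) - b' ≠ 0 := sub_ne_zero.mpr (by exact_mod_cast hb)
    push_cast
    rw [div_eq_div_iff hc hbb]
    linear_combination -h

theorem succ_eq_add_of_no_point_between {m n : ℤ → ℤ} {W : Set ℝ} (hirr : Irrational (s / c))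
    (hwin : ∀ j, (m j : ℝ) * s + n j * c ∈ W)
    (hmono : StrictMono fun j => (m j : ℝ) * c - n j * s)
    (hrange : ∀ a b : ℤ, (a : ℝ) * s + b * c ∈ W → ∃ j, m j = a ∧ n j = b)
    {j a b : ℤ} (hstep : 0 < (a : ℝ) * c - b * s)
    (hnext : ((m j + a : ℤ) : ℝ) * s + (n j + b : ℤ) * c ∈ W)
    (hgap : ∀ p q : ℤ, 0 < (p : ℝ) * c - q * s → (p : ℝ) * c - q * s < a * c - b * s →
      (m j : ℝ) * s + n j * c + (p * s + q * c) ∈ W → False) :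
    m (j + 1) = m j + a ∧ n (j + 1) = n j + b := by
  set F := fun j => (m j : ℝ) * c - n j * s
  obtain ⟨k, hmk, hnk⟩ := hrange _ _ hnext
  have hFk : F k = F j + (a * c - b * s) := by simp only [F, hmk, hnk]; push_cast; ring
  have hjk : j < k := hmono.lt_iff_lt.mp (by linarith)
  have hle : F (j + 1) ≤ F k := hmono.monotone (Int.add_one_le_of_lt hjk)
  have hFeq : F (j + 1) = F k := by
    refine hle.eq_or_lt.resolve_right fun hlt => hgap (m (j + 1) - m j) (n (j + 1) - n j) ?_ ?_ ?_
    · have := hmono (lt_add_one j)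
      simp only [F] at this
      push_cast; linarith
    · simp only [F] at hlt hFk
      push_cast; linarith
    · convert hwin (j + 1) using 1
      push_cast; ring
  have := int_mul_sub_int_mul_injective hirr (a₁ := (m (j + 1), n (j + 1))) (a₂ := (m k, n k)) hFeq
  simp only [Prod.mk.injEq, hmk, hnk] at this
  exact this

end LatticeStrip

theorem stmt5_general (θ : ℝ) (h1 : 0 < θ) (h2 : θ < Real.pi / 2)
    (hθ : Irrational (Real.tan θ)) (m n : ℤ → ℤ)
    (hwin : ∀ j : ℤ, 0 ≤ (m j : ℝ) * Real.sin θ + (n j : ℝ) * Real.cos θ ∧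
      (m j : ℝ) * Real.sin θ + (n j : ℝ) * Real.cos θ < Real.cos θ + Real.sin θ)
    (hmono : StrictMono (fun j : ℤ => (m j : ℝ) * Real.cos θ - (n j : ℝ) * Real.sin θ))
    (hrange : ∀ m' n' : ℤ,
      0 ≤ (m' : ℝ) * Real.sin θ + (n' : ℝ) * Real.cos θ →
      (m' : ℝ) * Real.sin θ + (n' : ℝ) * Real.cos θ < Real.cos θ + Real.sin θ →
      ∃ j : ℤ, m j = m' ∧ n j = n') :
    ∀ j : ℤ,
      ((m j : ℝ) * Real.sin θ + (n j : ℝ) * Real.cos θ ∈ Set.Ico 0 (Real.cos θ) →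
        ((m (j+1) : ℝ) * Real.cos θ - (n (j+1) : ℝ) * Real.sin θ) -
          ((m j : ℝ) * Real.cos θ - (n j : ℝ) * Real.sin θ) = Real.cos θ ∧
        ((m (j+1) : ℝ) * Real.sin θ + (n (j+1) : ℝ) * Real.cos θ) -
          ((m j : ℝ) * Real.sin θ + (n j : ℝ) * Real.cos θ) = Real.sin θ) ∧
      ((m j : ℝ) * Real.sin θ + (n j : ℝ) * Real.cos θ ∈
          Set.Ico (Real.cos θ) (Real.cos θ + Real.sin θ) →
        ((m (j+1) : ℝ) * Real.cos θ - (n (j+1) : ℝ) * Real.sin θ) -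
          ((m j : ℝ) * Real.cos θ - (n j : ℝ) * Real.sin θ) = Real.sin θ ∧
        ((m (j+1) : ℝ) * Real.sin θ + (n (j+1) : ℝ) * Real.cos θ) -
          ((m j : ℝ) * Real.sin θ + (n j : ℝ) * Real.cos θ) = -Real.cos θ) := by
  have hc : 0 < Real.cos θ := Real.cos_pos_of_mem_Ioo ⟨by linarith [Real.pi_pos], h2⟩
  have hs : 0 < Real.sin θ := Real.sin_pos_of_pos_of_lt_pi h1 (by linarith [Real.pi_pos])
  have hirr : Irrational (Real.sin θ / Real.cos θ) := by rwa [← Real.tan_eq_sin_div_cos]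
  have hrange' := fun a b (h : _ ∈ Set.Ico _ _) => hrange a b h.1 h.2
  intro j
  refine ⟨fun ⟨hj0, hjc⟩ => ?_, fun ⟨hjc, hjcs⟩ => ?_⟩
  · obtain ⟨hm, hn⟩ := succ_eq_add_of_no_point_between hirr hwin hmono hrange' (a := 1) (b := 0)
      (by simpa using hc) ⟨by push_cast; linarith, by push_cast; linarith⟩
      fun p q hX hXc hW => no_lattice_point_of_lt_cos hc hs p q hX (by simpa using hXc)
        (by linarith [hW.1]) (by linarith [hW.2])
    rw [hm, hn]
    push_cast
    constructor <;> ring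
  · obtain ⟨hm, hn⟩ := succ_eq_add_of_no_point_between hirr hwin hmono hrange' (a := 0) (b := -1)
      (by simpa using hs) ⟨by push_cast; linarith, by push_cast; linarith⟩
      fun p q hX hXs hW => no_lattice_point_of_lt_sin hc hs p q hX (by simpa using hXs)
        (by linarith [hW.1]) (by linarith [hW.2])
    rw [hm, hn]
    push_cast
    constructor <;> ring

theorem stmt5 (θ : ℝ) (h1 : 0 < θ) (h2 : θ < Real.pi / 2)
    (hθ : Irrational (Real.tan θ)) (m n : ℤ → ℤ)
    (hwin : ∀ j : ℤ, 0 ≤ (m j : ℝ) * Real.sin θ + (n j : ℝ) * Real.cos θ ∧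
      (m j : ℝ) * Real.sin θ + (n j : ℝ) * Real.cos θ < Real.cos θ + Real.sin θ)
    (hmono : StrictMono (fun j : ℤ => (m j : ℝ) * Real.cos θ - (n j : ℝ) * Real.sin θ))
    (h0 : m 0 = 0 ∧ n 0 = 0)
    (hrange : ∀ m' n' : ℤ,
      0 ≤ (m' : ℝ) * Real.sin θ + (n' : ℝ) * Real.cos θ →
      (m' : ℝ) * Real.sin θ + (n' : ℝ) * Real.cos θ < Real.cos θ + Real.sin θ →
      ∃ j : ℤ, m j = m' ∧ n j = n') :
    ∀ j : ℤ,
      ((m j : ℝ) * Real.sin θ + (n j : ℝ) * Real.cos θ ∈ Set.Ico 0 (Real.cos θ) →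
        ((m (j+1) : ℝ) * Real.cos θ - (n (j+1) : ℝ) * Real.sin θ) -
          ((m j : ℝ) * Real.cos θ - (n j : ℝ) * Real.sin θ) = Real.cos θ ∧
        ((m (j+1) : ℝ) * Real.sin θ + (n (j+1) : ℝ) * Real.cos θ) -
          ((m j : ℝ) * Real.sin θ + (n j : ℝ) * Real.cos θ) = Real.sin θ) ∧
      ((m j : ℝ) * Real.sin θ + (n j : ℝ) * Real.cos θ ∈
          Set.Ico (Real.cos θ) (Real.cos θ + Real.sin θ) →
        ((m (j+1) : ℝ) * Real.cos θ - (n (j+1) : ℝ) * Real.sin θ) -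
          ((m j : ℝ) * Real.cos θ - (n j : ℝ) * Real.sin θ) = Real.sin θ ∧
        ((m (j+1) : ℝ) * Real.sin θ + (n (j+1) : ℝ) * Real.cos θ) -
          ((m j : ℝ) * Real.sin θ + (n j : ℝ) * Real.cos θ) = -Real.cos θ) :=
  stmt5_general θ h1 h2 hθ m n hwin hmono hrange
end

section
/- Let θ₁, θ₂, θ₃ be real numbers that are linearly independent over ℚ (no nontrivial integer relation a₁θ₁ + a₂θ₂ + a₃θ₃ = 0). Then the set {(tθ₁ mod 1, tθ₂ mod 1, tθ₃ mod 1) : t ∈ ℝ} is dense in the torus [0,1)³. -/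
/-!
Let `C` be the closure of `ℝθ + ℤⁿ`, a closed subgroup of `ℝⁿ`. If `C ≠ ℝⁿ`, there is a nonzero
linear form `f` taking integer values on `C`: split off the largest subspace `V ⊆ C`; in a
complement `W` of `V`, the subgroup `C ∩ W` contains no line, hence is discrete (the directions
of ever smaller nonzero elements of `C` accumulate at a direction whose whole line lies in `C`),
and a discrete subgroup lies in a lattice or in a proper subspace. But `f (tθ) ∈ ℤ` for all `t`
forces `f θ = 0`, while `f (eᵢ) ∈ ℤ`, so the independence of the `θᵢ` gives `f = 0`.
-/

open Filter Topology

theorem tendsto_floor_div_mul_self {α : Type*} {l : Filter α} {r : α → ℝ} (hr : ∀ k, 0 < r k)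
    (hr0 : Tendsto r l (𝓝 0)) (t : ℝ) :
    Tendsto (fun k => (⌊t / r k⌋ : ℝ) * r k) l (𝓝 t) := by
  have hlower : Tendsto (fun k => t - r k) l (𝓝 t) := by simpa using tendsto_const_nhds.sub hr0
  refine tendsto_of_tendsto_of_tendsto_of_le_of_le hlower tendsto_const_nhds (fun k => ?_)
    (fun k => ?_)
  · have := Int.lt_floor_add_one (t / r k)
    rw [div_lt_iff₀ (hr k)] at this
    linarith
  · exact (le_div_iff₀ (hr k)).1 (Int.floor_le _)

section LineSpace

variable {E : Type*}

def AddSubgroup.lineSpace [AddCommGroup E] [Module ℝ E] (C : AddSubgroup E) : Submodule ℝ E where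
  carrier := {v | ∀ t : ℝ, t • v ∈ C}
  add_mem' hv hw t := by simpa only [smul_add] using C.add_mem (hv t) (hw t)
  zero_mem' t := by simpa only [smul_zero] using C.zero_mem
  smul_mem' c v hv t := by simpa only [smul_smul] using hv (t * c)

theorem AddSubgroup.mem_of_mem_lineSpace [AddCommGroup E] [Module ℝ E] {C : AddSubgroup E}
    {v : E} (hv : v ∈ C.lineSpace) : v ∈ C := by
  simpa using hv 1

variable [NormedAddCommGroup E] [NormedSpace ℝ E]

theorem AddSubgroup.mem_lineSpace_of_tendsto {α : Type*} {l : Filter α} [l.NeBot]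
    {C : AddSubgroup E} (hC : IsClosed (C : Set E)) {c : α → E} (hcC : ∀ k, c k ∈ C)
    (hc0 : ∀ k, c k ≠ 0) (hc : Tendsto c l (𝓝 0)) {u : E}
    (hu : Tendsto (fun k => ‖c k‖⁻¹ • c k) l (𝓝 u)) : u ∈ C.lineSpace := by
  intro t
  have hr : ∀ k, 0 < ‖c k‖ := fun k => norm_pos_iff.2 (hc0 k)
  have hlim : Tendsto (fun k => ⌊t / ‖c k‖⌋ • c k) l (𝓝 (t • u)) := by
    refine ((tendsto_floor_div_mul_self hr (tendsto_norm_zero.comp hc) t).smul hu).congr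
      fun k => ?_
    rw [smul_smul, mul_assoc, mul_inv_cancel₀ (hr k).ne', mul_one, Int.cast_smul_eq_zsmul]
  exact hC.mem_of_tendsto hlim (Eventually.of_forall fun k => C.zsmul_mem (hcC k) _)

theorem AddSubgroup.discreteTopology_of_lineSpace_eq_bot [FiniteDimensional ℝ E]
    {C : AddSubgroup E} (hC : IsClosed (C : Set E)) (hV : C.lineSpace = ⊥) :
    DiscreteTopology C := by
  rw [discreteTopology_iff_isOpen_singleton_zero, Metric.isOpen_singleton_iff]
  by_contra! hsmall
  choose c hc hc0 using fun k : ℕ => hsmall (1 / (k + 1)) Nat.one_div_pos_of_nat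
  have hcE : Tendsto (fun k => (c k : E)) atTop (𝓝 0) := by
    refine squeeze_zero_norm (fun k => (hc k).le.trans' ?_) tendsto_one_div_add_atTop_nhds_zero_nat
    simp [dist_eq_norm]
  have hsphere : ∀ k, ‖(c k : E)‖⁻¹ • (c k : E) ∈ Metric.sphere (0 : E) 1 := fun k => by
    simp [norm_smul, (hc0 k)]
  obtain ⟨u, hu, φ, hφ, hlim⟩ := (isCompact_sphere (0 : E) 1).tendsto_subseq hsphere
  have hmem : u ∈ C.lineSpace :=
    mem_lineSpace_of_tendsto hC (fun k => (c (φ k)).2) (fun k => by simpa using hc0 (φ k))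
      (hcE.comp hφ.tendsto_atTop) hlim
  rw [hV, Submodule.mem_bot] at hmem
  simp [hmem] at hu

theorem AddSubgroup.exists_dual_ne_zero_intValued [FiniteDimensional ℝ E] [Nontrivial E]
    (D : AddSubgroup E) [DiscreteTopology D] :
    ∃ f : Module.Dual ℝ E, f ≠ 0 ∧ ∀ d ∈ D, ∃ k : ℤ, f d = k := by
  by_cases hspan : Submodule.span ℝ (D : Set E) = ⊤
  · let L := D.toIntSubmodule
    have : DiscreteTopology L := ‹DiscreteTopology D›
    have : IsZLattice ℝ L := ⟨hspan⟩
    let b := Module.Free.chooseBasis ℤ L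
    let B := b.ofZLatticeBasis ℝ L
    obtain ⟨i⟩ := B.index_nonempty
    refine ⟨B.coord i, fun h => by simpa using LinearMap.congr_fun h (B i), fun d hd => ?_⟩
    exact ⟨b.repr ⟨d, hd⟩ i, b.ofZLatticeBasis_repr_apply ℝ L ⟨d, hd⟩ i⟩
  · obtain ⟨f, hf0, hfD⟩ := Submodule.exists_dual_map_eq_bot_of_lt_top
      (lt_top_iff_ne_top.2 hspan) inferInstance
    refine ⟨f, hf0, fun d hd => ⟨0, ?_⟩⟩
    rw [Int.cast_zero, ← Submodule.mem_bot ℝ, ← hfD]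
    exact Submodule.mem_map_of_mem (Submodule.subset_span hd)

theorem AddSubgroup.exists_dual_ne_zero_intValued_of_isClosed [FiniteDimensional ℝ E]
    {C : AddSubgroup E} (hC : IsClosed (C : Set E)) (hCtop : C ≠ ⊤) :
    ∃ f : Module.Dual ℝ E, f ≠ 0 ∧ ∀ c ∈ C, ∃ k : ℤ, f c = k := by
  obtain ⟨W, hVW⟩ := C.lineSpace.exists_isCompl
  let p := W.projectionOnto C.lineSpace hVW.symm
  have hpC : ∀ c ∈ C, (p c : E) ∈ C := fun c hc => by
    have := W.projection_add_projection_eq_self hVW.symm c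
    rw [Submodule.projection_apply, ← eq_sub_iff_add_eq] at this
    exact this ▸ C.sub_mem hc (mem_of_mem_lineSpace (Submodule.coe_mem _))
  let D := C.comap W.subtype.toAddMonoidHom
  have hD : IsClosed (D : Set W) := hC.preimage continuous_subtype_val
  have hDline : D.lineSpace = ⊥ := by
    refine (Submodule.eq_bot_iff _).2 fun w hw => Subtype.ext ?_
    exact (Submodule.disjoint_def.1 hVW.disjoint) w (fun t => hw t) w.2
  have : Nontrivial W := Submodule.nontrivial_iff_ne_bot.2 fun hW => hCtop <| by
    refine (AddSubgroup.eq_top_iff' C).2 fun x => mem_of_mem_lineSpace ?_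
    simp [show C.lineSpace = ⊤ by simpa [hW] using hVW.sup_eq_top]
  have := discreteTopology_of_lineSpace_eq_bot hD hDline
  obtain ⟨f, hf0, hfD⟩ := D.exists_dual_ne_zero_intValued
  refine ⟨f ∘ₗ p, fun h => hf0 ?_, fun c hc => hfD (p c) (hpC c hc)⟩
  ext w
  obtain ⟨x, rfl⟩ := W.projectionOnto_surjective hVW.symm w
  exact LinearMap.congr_fun h x

end LineSpace

def flowSubgroup {ι : Type*} (θ : ι → ℝ) : AddSubgroup (ι → ℝ) where
  carrier := {x | ∃ (t : ℝ) (a : ι → ℤ), ∀ i, x i = t * θ i + a i}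
  zero_mem' := ⟨0, 0, by simp⟩
  add_mem' := by
    rintro x y ⟨t, a, hx⟩ ⟨s, b, hy⟩
    exact ⟨t + s, a + b, fun i => by simp only [Pi.add_apply, hx, hy, Int.cast_add]; ring⟩
  neg_mem' := by
    rintro x ⟨t, a, hx⟩
    exact ⟨-t, -a, fun i => by simp only [Pi.neg_apply, hx, Int.cast_neg]; ring⟩

theorem dense_flowSubgroup {ι : Type*} [Fintype ι] {θ : ι → ℝ}
    (hθ : ∀ a : ι → ℤ, ∑ i, (a i : ℝ) * θ i = 0 → a = 0) :
    Dense (flowSubgroup θ : Set (ι → ℝ)) := by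
  classical
  rw [dense_iff_closure_eq, ← AddSubgroup.topologicalClosure_coe, ← AddSubgroup.coe_top,
    SetLike.coe_set_eq]
  by_contra hC
  obtain ⟨f, hf0, hfC⟩ := AddSubgroup.exists_dual_ne_zero_intValued_of_isClosed
    (AddSubgroup.isClosed_topologicalClosure _) hC
  have hf : ∀ x ∈ flowSubgroup θ, ∃ k : ℤ, f x = k := fun x hx =>
    hfC x (AddSubgroup.le_topologicalClosure _ hx)
  have hfθ : f θ = 0 := by
    by_contra hne
    obtain ⟨k, hk⟩ := hf ((2 * f θ)⁻¹ • θ) ⟨(2 * f θ)⁻¹, 0, fun i => by simp⟩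
    have : (2 * k : ℝ) = 1 := by
      rw [← hk, map_smul, smul_eq_mul]
      field_simp
    have : (2 * k : ℤ) = 1 := by exact_mod_cast this
    omega
  choose k hk using fun i => hf (Pi.single i 1) ⟨0, Pi.single i 1, fun j => by
    by_cases h : j = i <;> simp [h]⟩
  have hsingle : ∀ i x, f (Pi.single i x) = x * k i := fun i x => by
    rw [← hk, ← smul_eq_mul, ← map_smul, ← Pi.single_smul, smul_eq_mul, mul_one]
  have hk0 : k = 0 := hθ k <| by
    rw [← hfθ]
    conv_rhs => rw [← Finset.univ_sum_single θ]
    simp only [map_sum, hsingle, mul_comm]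
  exact hf0 <| LinearMap.pi_ext fun i x => by simp [hsingle, hk0]

theorem stmt6 (θ₁ θ₂ θ₃ : ℝ)
    (h : ∀ a₁ a₂ a₃ : ℤ, (a₁ : ℝ) * θ₁ + (a₂ : ℝ) * θ₂ + (a₃ : ℝ) * θ₃ = 0 →
      a₁ = 0 ∧ a₂ = 0 ∧ a₃ = 0) :
    ∀ y₁ y₂ y₃ : ℝ, ∀ ε : ℝ, 0 < ε →
      ∃ t : ℝ, ∃ k₁ k₂ k₃ : ℤ,
        |t * θ₁ - y₁ - k₁| < ε ∧ |t * θ₂ - y₂ - k₂| < ε ∧ |t * θ₃ - y₃ - k₃| < ε := by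
  intro y₁ y₂ y₃ ε hε
  have hθ : ∀ a : Fin 3 → ℤ, ∑ i, (a i : ℝ) * ![θ₁, θ₂, θ₃] i = 0 → a = 0 := fun a ha => by
    obtain ⟨h₀, h₁, h₂⟩ := h (a 0) (a 1) (a 2) (by simpa [Fin.sum_univ_three] using ha)
    ext i; fin_cases i <;> assumption
  obtain ⟨x, hxy, t, a, hx⟩ := Metric.dense_iff.1 (dense_flowSubgroup hθ) ![y₁, y₂, y₃] ε hε
  have hclose : ∀ i, |t * ![θ₁, θ₂, θ₃] i - ![y₁, y₂, y₃] i - ↑(-a i)| < ε := fun i => by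
    rw [Int.cast_neg, sub_neg_eq_add, sub_add_eq_add_sub, ← hx]
    exact (dist_le_pi_dist x _ i).trans_lt hxy
  exact ⟨t, -a 0, -a 1, -a 2, hclose 0, hclose 1, hclose 2⟩
end

section
/- Let θ ∈ ℝ with tan θ irrational, ε > 0, Λ_F = {m·cos θ − n·sin θ : m, n ∈ ℤ, 0 ≤ m·sin θ + n·cos θ < ε}, and Λ = Λ_F × ℤ ⊂ ℝ². Let s ∈ ℝ with s ∉ ℚ·cos θ + ℚ·sin θ, and w = (1, s). Then Λ + wℝ = {(x + t, k + st) : x ∈ Λ_F, k ∈ ℤ, t ∈ ℝ} is dense in ℝ². -/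
/-!
Write `x = m cos θ - n sin θ` and `y = m sin θ + n cos θ`. The point `(x + t, k + s t)` is
determined, up to moving along `w`, by `k - s x`, so it suffices that the values `k - s x` with
`y ∈ (0, ε)` are dense in `ℝ`. This follows from density of the group `Γ = {(y, k - s x)}` in `ℝ²`.
`Γ` is not discrete, because its first projection is dense and `(0, 1) ∈ Γ`. So its closure contains
a line `ℝ d`, since normalised short vectors of `Γ` accumulate on a direction `d`. Then `Γ` is dense
as soon as its image under a linear form vanishing on `d` is dense in `ℝ`. That holds for every
nonzero form `α a + β b`: otherwise two of the generators would have a rational ratio, forcing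
either `tan θ ∈ ℚ` (if `β = 0`) or `s ∈ ℚ cos θ + ℚ sin θ`.
-/

open Filter Topology Set

theorem tendsto_round_div_mul {ι : Type*} {l : Filter ι} {a : ι → ℝ}
    (ha : Tendsto a l (𝓝 0)) (ha0 : ∀ i, a i ≠ 0) (t : ℝ) :
    Tendsto (fun i => round (t / a i) * a i) l (𝓝 t) := by
  rw [← tendsto_sub_nhds_zero_iff]
  refine squeeze_zero_norm (fun i => ?_) (by simpa using ha.norm.div_const 2)
  calc ‖round (t / a i) * a i - t‖ = |round (t / a i) - t / a i| * |a i| := by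
        rw [Real.norm_eq_abs, ← abs_mul, sub_mul, div_mul_cancel₀ _ (ha0 i)]
    _ ≤ 1 / 2 * |a i| := by gcongr; rw [abs_sub_comm]; exact abs_sub_round _
    _ = ‖a i‖ / 2 := by rw [Real.norm_eq_abs]; ring

namespace AddSubgroup

variable {E : Type*} [NormedAddCommGroup E]

theorem exists_seq_ne_zero_tendsto_zero (H : AddSubgroup E) {K : Set E} (hK : IsCompact K)
    {u : ℕ → E} (hu : Function.Injective u) (huH : ∀ i, u i ∈ H) (huK : ∀ i, u i ∈ K) :
    ∃ g : ℕ → E, (∀ k, g k ∈ H) ∧ (∀ k, g k ≠ 0) ∧ Tendsto g atTop (𝓝 0) := by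
  obtain ⟨a, -, φ, hφ, hlim⟩ := hK.tendsto_subseq huK
  refine ⟨fun k => u (φ (k + 1)) - u (φ k), fun k => sub_mem (huH _) (huH _),
    fun k => sub_ne_zero.2 (hu.ne (hφ k.lt_succ_self).ne'), ?_⟩
  simpa using (hlim.comp (tendsto_add_atTop_nat 1)).sub hlim

variable [NormedSpace ℝ E]

theorem smul_mem_topologicalClosure_of_tendsto (H : AddSubgroup E) {g : ℕ → E} {d : E}
    (hgH : ∀ k, g k ∈ H) (hg0 : ∀ k, g k ≠ 0) (hg : Tendsto g atTop (𝓝 0))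
    (hd : Tendsto (fun k => ‖g k‖⁻¹ • g k) atTop (𝓝 d)) (t : ℝ) :
    t • d ∈ H.topologicalClosure := by
  have hnorm0 : ∀ k, ‖g k‖ ≠ 0 := fun k => norm_ne_zero_iff.2 (hg0 k)
  have hmul : ∀ k, round (t / ‖g k‖) • g k
      = (round (t / ‖g k‖) * ‖g k‖) • (‖g k‖⁻¹ • g k) := by
    intro k
    rw [smul_smul, mul_assoc, mul_inv_cancel₀ (hnorm0 k), mul_one, Int.cast_smul_eq_zsmul]
  have hlim : Tendsto (fun k => round (t / ‖g k‖) • g k) atTop (𝓝 (t • d)) := by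
    simpa only [hmul] using (tendsto_round_div_mul (by simpa using hg.norm) hnorm0 t).smul hd
  exact H.isClosed_topologicalClosure.mem_of_tendsto hlim
    (Eventually.of_forall fun k => H.le_topologicalClosure (zsmul_mem (hgH k) _))

theorem exists_ne_zero_forall_smul_mem_topologicalClosure [FiniteDimensional ℝ E]
    (H : AddSubgroup E) {g : ℕ → E} (hgH : ∀ k, g k ∈ H) (hg0 : ∀ k, g k ≠ 0)
    (hg : Tendsto g atTop (𝓝 0)) :
    ∃ d ≠ (0 : E), ∀ t : ℝ, t • d ∈ H.topologicalClosure := by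
  have hsphere : ∀ k, ‖g k‖⁻¹ • g k ∈ Metric.sphere (0 : E) 1 := fun k => by
    simp [norm_smul, hg0 k]
  obtain ⟨d, hd, χ, hχ, hlim⟩ := (isCompact_sphere (0 : E) 1).tendsto_subseq hsphere
  refine ⟨d, ne_zero_of_mem_unit_sphere ⟨d, hd⟩, smul_mem_topologicalClosure_of_tendsto H
    (fun k => hgH (χ k)) (fun k => hg0 (χ k)) (hg.comp hχ.tendsto_atTop) hlim⟩

end AddSubgroup

theorem AddSubgroup.dense_of_ker_le_topologicalClosure {E : Type*} [AddCommGroup E] [Module ℝ E]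
    [TopologicalSpace E] [IsTopologicalAddGroup E] [ContinuousSMul ℝ E] (H : AddSubgroup E)
    (L : E →ₗ[ℝ] ℝ) {e : E} (he : L e = 1) (hker : ∀ x, L x = 0 → x ∈ H.topologicalClosure)
    (hL : Dense (L '' H)) : Dense (H : Set E) := by
  set C := H.topologicalClosure
  have hproj : ∀ x, x - L x • e ∈ C := fun x => hker _ (by simp [he])
  have hline : ∀ r : ℝ, r • e ∈ C := by
    have hclosed : IsClosed {r : ℝ | r • e ∈ C} :=
      H.isClosed_topologicalClosure.preimage (continuous_id.smul continuous_const)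
    have hsub : L '' H ⊆ {r : ℝ | r • e ∈ C} := by
      rintro _ ⟨h, hh, rfl⟩
      simpa using sub_mem (H.le_topologicalClosure hh) (hproj h)
    intro r
    exact closure_minimal hsub hclosed (hL r)
  intro x
  rw [← H.topologicalClosure_coe, SetLike.mem_coe]
  simpa using add_mem (hproj x) (hline (L x))

theorem AddSubgroup.dense_of_smul_mem_topologicalClosure (H : AddSubgroup (ℝ × ℝ)) {d : ℝ × ℝ}
    (hd : d ≠ 0) (hline : ∀ t : ℝ, t • d ∈ H.topologicalClosure)
    (hL : Dense ((fun p : ℝ × ℝ => -d.2 * p.1 + d.1 * p.2) '' H)) : Dense (H : Set (ℝ × ℝ)) := by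
  have hN : d.1 ^ 2 + d.2 ^ 2 ≠ 0 := by
    contrapose! hd
    ext <;> simp <;> nlinarith [sq_nonneg d.1, sq_nonneg d.2]
  set L : ℝ × ℝ →ₗ[ℝ] ℝ := -d.2 • LinearMap.fst ℝ ℝ ℝ + d.1 • LinearMap.snd ℝ ℝ ℝ
  have hLapply : ∀ p : ℝ × ℝ, L p = -d.2 * p.1 + d.1 * p.2 := fun p => by simp [L]
  refine H.dense_of_ker_le_topologicalClosure L (e := (d.1 ^ 2 + d.2 ^ 2)⁻¹ • (-d.2, d.1))
    ?_ (fun p hp => ?_) (by simpa [hLapply] using hL)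
  · rw [hLapply]
    simp only [Prod.smul_fst, Prod.smul_snd, smul_eq_mul]
    field_simp
    ring
  · convert hline ((d.1 ^ 2 + d.2 ^ 2)⁻¹ * (d.1 * p.1 + d.2 * p.2)) using 1
    rw [hLapply] at hp
    ext <;> simp only [Prod.smul_fst, Prod.smul_snd, smul_eq_mul] <;> field_simp
    · linear_combination -d.2 * hp
    · linear_combination d.1 * hp

theorem Dense.image_snd_inter_prod {X Y : Type*} [TopologicalSpace X] [TopologicalSpace Y]
    {S : Set (X × Y)} (hS : Dense S) {W : Set X} (hW : IsOpen W) (hW' : W.Nonempty) :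
    Dense (Prod.snd '' (S ∩ W ×ˢ univ)) := by
  refine dense_iff_inter_open.2 fun V hV hV' => ?_
  obtain ⟨p, ⟨hpW, hpV⟩, hpS⟩ := hS.inter_open_nonempty _ (hW.prod hV) (hW'.prod hV')
  exact ⟨p.2, hpV, p, ⟨hpS, hpW, trivial⟩, rfl⟩

theorem AddSubgroup.dense_of_irrational_div (G : AddSubgroup ℝ) {a b : ℝ} (ha : a ∈ G) (hb : b ∈ G)
    (hab : Irrational (a / b)) : Dense (G : Set ℝ) :=
  (dense_addSubgroupClosure_pair_iff.2 hab).mono <|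
    (AddSubgroup.closure_le G).2 (pair_subset ha hb)

open Real

/-- The group `Γ`: the image of the lattice `{(x, k, y)}` under `(x, k, y) ↦ (y, k - s x)`. -/
def modelLattice (θ s : ℝ) : AddSubgroup (ℝ × ℝ) where
  carrier := {p | ∃ m n k : ℤ, p = (m * sin θ + n * cos θ, k - s * (m * cos θ - n * sin θ))}
  add_mem' := by
    rintro _ _ ⟨m, n, k, rfl⟩ ⟨m', n', k', rfl⟩
    exact ⟨m + m', n + n', k + k', by ext <;> simp <;> ring⟩
  zero_mem' := ⟨0, 0, 0, by ext <;> simp⟩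
  neg_mem' := by
    rintro _ ⟨m, n, k, rfl⟩
    exact ⟨-m, -n, -k, by ext <;> simp <;> ring⟩

variable {θ s : ℝ}

theorem mk_mem_modelLattice (m n k : ℤ) :
    ((m * sin θ + n * cos θ, k - s * (m * cos θ - n * sin θ)) : ℝ × ℝ) ∈ modelLattice θ s :=
  ⟨m, n, k, rfl⟩

theorem fst_fract_snd_mem_modelLattice {p : ℝ × ℝ} (hp : p ∈ modelLattice θ s) :
    (p.1, Int.fract p.2) ∈ modelLattice θ s := by
  have h01 : ((0, 1) : ℝ × ℝ) ∈ modelLattice θ s := by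
    simpa using mk_mem_modelLattice (θ := θ) (s := s) 0 0 1
  convert sub_mem hp (zsmul_mem h01 ⌊p.2⌋) using 1
  ext <;> simp [← Int.self_sub_floor]

theorem dense_image_modelLattice (hθ : Irrational (tan θ))
    (hs : ¬∃ p q : ℚ, s = p * cos θ + q * sin θ) {α β : ℝ} (hαβ : α ≠ 0 ∨ β ≠ 0) :
    Dense ((fun p : ℝ × ℝ => α * p.1 + β * p.2) '' modelLattice θ s) := by
  set f : ℝ × ℝ →ₗ[ℝ] ℝ := α • LinearMap.fst ℝ ℝ ℝ + β • LinearMap.snd ℝ ℝ ℝ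
  set G := (modelLattice θ s).map f.toAddMonoidHom
  have hG : (G : Set ℝ) = (fun p : ℝ × ℝ => α * p.1 + β * p.2) '' modelLattice θ s := by
    simp only [G, AddSubgroup.coe_map]
    rfl
  have hmem : ∀ m n k : ℤ,
      α * (m * sin θ + n * cos θ) + β * (k - s * (m * cos θ - n * sin θ)) ∈ G :=
    fun m n k => by rw [← SetLike.mem_coe, hG]; exact ⟨_, mk_mem_modelLattice m n k, rfl⟩
  have h1 : α * sin θ - β * (s * cos θ) ∈ G := by simpa [sub_eq_add_neg] using hmem 1 0 0
  have h2 : α * cos θ + β * (s * sin θ) ∈ G := by simpa using hmem 0 1 0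
  have h3 : β ∈ G := by simpa using hmem 0 0 1
  rw [← hG]
  rcases eq_or_ne β 0 with rfl | hβ
  · have hα := hαβ.resolve_right (not_not.2 rfl)
    refine G.dense_of_irrational_div (by simpa using h1) (by simpa using h2) ?_
    rwa [mul_div_mul_left _ _ hα, ← tan_eq_sin_div_cos]
  by_cases h1' : Irrational ((α * sin θ - β * (s * cos θ)) / β)
  · exact G.dense_of_irrational_div h1 h3 h1'
  by_cases h2' : Irrational ((α * cos θ + β * (s * sin θ)) / β)
  · exact G.dense_of_irrational_div h2 h3 h2'
  exfalso
  obtain ⟨p, hp⟩ := not_not.1 h1'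
  obtain ⟨q, hq⟩ := not_not.1 h2'
  rw [eq_div_iff hβ] at hp hq
  refine hs ⟨-p, q, mul_left_cancel₀ hβ ?_⟩
  push_cast
  linear_combination cos θ * hp - sin θ * hq - β * s * sin_sq_add_cos_sq θ

theorem exists_ne_zero_forall_smul_mem_topologicalClosure_modelLattice
    (hθ : Irrational (tan θ)) (hs : ¬∃ p q : ℚ, s = p * cos θ + q * sin θ) :
    ∃ d ≠ (0 : ℝ × ℝ), ∀ t : ℝ, t • d ∈ (modelLattice θ s).topologicalClosure := by
  have hfst : Dense (Prod.fst '' (modelLattice θ s : Set (ℝ × ℝ))) := by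
    simpa using dense_image_modelLattice hθ hs (α := 1) (β := 0) (Or.inl one_ne_zero)
  -- first coordinates in disjoint intervals make the chosen sequence injective
  have hpick : ∀ i : ℕ, ∃ p ∈ modelLattice θ s,
      p.1 ∈ Ioo (1 / ((i : ℝ) + 2)) (1 / ((i : ℝ) + 1)) ∧ p.2 ∈ Ico 0 1 := by
    intro i
    have hlt : 1 / ((i : ℝ) + 2) < 1 / ((i : ℝ) + 1) :=
      one_div_lt_one_div_of_lt (by positivity) (by linarith)
    obtain ⟨_, ⟨p, hp, rfl⟩, hp1⟩ := hfst.exists_between hlt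
    exact ⟨_, fst_fract_snd_mem_modelLattice hp, hp1, Int.fract_nonneg _, Int.fract_lt_one _⟩
  choose u huH hu1 hu2 using hpick
  have hanti : StrictAnti fun i => (u i).1 := strictAnti_nat_of_succ_lt fun i => by
    have h := (hu1 (i + 1)).2
    push_cast [add_assoc, one_add_one_eq_two] at h
    exact h.trans (hu1 i).1
  have huK : ∀ i, u i ∈ Icc (0 : ℝ) 1 ×ˢ Icc (0 : ℝ) 1 := fun i => by
    have hle : 1 / ((i : ℝ) + 1) ≤ 1 := by
      rw [div_le_one (by positivity)]
      linarith [i.cast_nonneg (α := ℝ)]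
    exact ⟨⟨(by positivity : (0 : ℝ) < _).le.trans (hu1 i).1.le, (hu1 i).2.le.trans hle⟩,
      Ico_subset_Icc_self (hu2 i)⟩
  obtain ⟨g, hgH, hg0, hg⟩ := (modelLattice θ s).exists_seq_ne_zero_tendsto_zero
    (isCompact_Icc.prod isCompact_Icc) hanti.injective.of_comp huH huK
  exact (modelLattice θ s).exists_ne_zero_forall_smul_mem_topologicalClosure hgH hg0 hg

theorem dense_modelLattice (hθ : Irrational (tan θ))
    (hs : ¬∃ p q : ℚ, s = p * cos θ + q * sin θ) : Dense (modelLattice θ s : Set (ℝ × ℝ)) := by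
  obtain ⟨d, hd, hline⟩ := exists_ne_zero_forall_smul_mem_topologicalClosure_modelLattice hθ hs
  refine (modelLattice θ s).dense_of_smul_mem_topologicalClosure hd hline
    (dense_image_modelLattice hθ hs ?_)
  by_contra! h
  exact hd (Prod.ext h.2 (neg_eq_zero.1 h.1))

theorem stmt7 (θ : ℝ) (hθ : Irrational (Real.tan θ)) (ε : ℝ) (hε : 0 < ε)
    (s : ℝ)
    (hs : ¬∃ p q : ℚ, s = (p : ℝ) * Real.cos θ + (q : ℝ) * Real.sin θ) :
    Dense {p : ℝ × ℝ | ∃ m n k : ℤ, ∃ t : ℝ,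
      0 ≤ (m : ℝ) * Real.sin θ + (n : ℝ) * Real.cos θ ∧
      (m : ℝ) * Real.sin θ + (n : ℝ) * Real.cos θ < ε ∧
      p = ((m : ℝ) * Real.cos θ - (n : ℝ) * Real.sin θ + t, (k : ℝ) + s * t)} := by
  -- `p` lies in `Λ + wℝ` once `p.2 - s p.1` is the second coordinate of a point of
  -- `modelLattice θ s` whose first coordinate lies in the window
  have hD := (dense_modelLattice hθ hs).image_snd_inter_prod isOpen_Ioo (nonempty_Ioo.2 hε)
  set L : ℝ × ℝ →L[ℝ] ℝ := ContinuousLinearMap.snd ℝ ℝ ℝ - s • ContinuousLinearMap.fst ℝ ℝ ℝ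
  have hL : ∀ p : ℝ × ℝ, L p = p.2 - s * p.1 := fun p => by simp [L]
  have hopen : IsOpenMap L := L.isOpenMap fun v => ⟨(0, v), by simp [hL]⟩
  refine (hD.preimage hopen).mono ?_
  rintro p ⟨_, ⟨⟨m, n, k, rfl⟩, ⟨hy0, hyε⟩, -⟩, hp⟩
  refine ⟨m, n, k, p.1 - (m * cos θ - n * sin θ), hy0.le, hyε, ?_⟩
  rw [hL] at hp
  ext <;> simp only at hp ⊢ <;> linarith
end

section
/- Let θ ∈ ℝ with tan θ irrational, λ = a·cos θ − b·sin θ with a, b, d ∈ ℤ relatively prime, d ≠ 0, λ* = a·sin θ + b·cos θ, and suppose 0 < ε < 1/|λ*|. With Λ_F, Λ = Λ_F × ℤ, w = (1, λ/d), and S = {y : (0, y) ∈ Λ + wℝ}, the closure of S equals {(l + t·λ*)/d : l ∈ ℤ, 0 ≤ t ≤ ε}. -/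
/-!
Writing `s = sin θ`, `c = cos θ`, `λ = a c - b s` and `λ* = a s + b c`, the line through the point
`(m c - n s, k)` of `Λ` in direction `w` meets the `y`-axis at `(k d - m a - n b + (m s + n c) λ*) / d`.
So the trace consists of the points `(l + u λ*) / d` with `u = m s + n c ∈ [0, ε)` and
`k d - m a - n b = l`, and it lies in the right-hand side, which is closed. Conversely, since
`gcd(a, b, d) = 1` every integer `l` occurs, and the admissible `u` for a fixed `l` form a translate of
`d (ℤ s + ℤ c)`, which is dense because `s / c = tan θ` is irrational.
-/

open Set Real

lemma exists_mul_sub_sub_eq_of_gcd_eq_one {a b d : ℤ} (hg : Int.gcd a (Int.gcd b d) = 1)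
    (l : ℤ) : ∃ m n k : ℤ, k * d - m * a - n * b = l := by
  have hab := Int.gcd_eq_gcd_ab a (Int.gcd b d)
  have hbd := Int.gcd_eq_gcd_ab b d
  rw [hg, Nat.cast_one] at hab
  refine ⟨-l * Int.gcdA a (Int.gcd b d), -l * (Int.gcdA b d * Int.gcdB a (Int.gcd b d)),
    l * (Int.gcdB b d * Int.gcdB a (Int.gcd b d)), ?_⟩
  linear_combination (-l) * hab - l * Int.gcdB a (Int.gcd b d) * hbd

lemma dense_setOf_mul_sub_sub_eq {s c : ℝ} (hsc : Irrational (s / c)) {a b d : ℤ} (hd : d ≠ 0)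
    (hg : Int.gcd a (Int.gcd b d) = 1) (l : ℤ) :
    Dense {u : ℝ | ∃ m n k : ℤ, k * d - m * a - n * b = l ∧ u = m * s + n * c} := by
  obtain ⟨m₀, n₀, k₀, hl⟩ := exists_mul_sub_sub_eq_of_gcd_eq_one hg l
  have hdense : Dense (AddSubgroup.closure {(d : ℝ) * s, (d : ℝ) * c} : Set ℝ) := by
    rwa [dense_addSubgroupClosure_pair_iff, mul_div_mul_left _ _ (Int.cast_ne_zero.mpr hd)]
  refine ((Equiv.addLeft ((m₀ : ℝ) * s + n₀ * c)).surjective.denseRange.dense_image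
    (continuous_const_add _) hdense).mono ?_
  rintro _ ⟨x, hx, rfl⟩
  obtain ⟨m', n', rfl⟩ := AddSubgroup.mem_closure_pair.mp hx
  refine ⟨m₀ + d * m', n₀ + d * n', k₀ + m' * a + n' * b, by linear_combination hl, ?_⟩
  simp only [Equiv.coe_addLeft, zsmul_eq_mul]
  push_cast
  ring

lemma add_div_mul_eq_trace (θ : ℝ) (a b : ℤ) {d : ℤ} (hd : (d : ℝ) ≠ 0) (m n k : ℤ) :
    (k : ℝ) + ((a : ℝ) * cos θ - (b : ℝ) * sin θ) / d * ((n : ℝ) * sin θ - (m : ℝ) * cos θ)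
      = (((k * d - m * a - n * b : ℤ) : ℝ) +
          ((m : ℝ) * sin θ + (n : ℝ) * cos θ) * ((a : ℝ) * sin θ + (b : ℝ) * cos θ)) / d := by
  field_simp
  push_cast
  linear_combination (-((a : ℝ) * m + (b : ℝ) * n)) * sin_sq_add_cos_sq θ

open Pointwise in
lemma isClosed_setOf_int_add_mul_div (L ε : ℝ) {d : ℝ} (hd : d ≠ 0) :
    IsClosed {y : ℝ | ∃ l : ℤ, ∃ t : ℝ, 0 ≤ t ∧ t ≤ ε ∧ y = (l + t * L) / d} := by
  have hsum : IsClosed (range ((↑) : ℤ → ℝ) + (· * L) '' Icc 0 ε) :=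
    Int.isClosedEmbedding_coe_real.isClosed_range.add_right_of_isCompact
      (isCompact_Icc.image (continuous_mul_const L))
  convert hsum.preimage (continuous_mul_const d) using 1
  ext y
  simp only [mem_preimage, mem_add, mem_range, mem_image, mem_ofPred_eq, mem_Icc]
  constructor
  · rintro ⟨l, t, h0, h1, rfl⟩
    exact ⟨l, ⟨l, rfl⟩, t * L, ⟨t, ⟨h0, h1⟩, rfl⟩, by field_simp⟩
  · rintro ⟨_, ⟨l, rfl⟩, _, ⟨t, ⟨h0, h1⟩, rfl⟩, hy⟩
    exact ⟨l, t, h0, h1, by rw [eq_div_iff hd, hy]⟩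

theorem stmt9_general (θ : ℝ) (hθ : Irrational (Real.tan θ)) (a b d : ℤ) (hd : d ≠ 0)
    (hg : Int.gcd a (Int.gcd b d) = 1) (ε : ℝ) (hε0 : 0 < ε) :
    closure {y : ℝ | ∃ m n k : ℤ, ∃ t : ℝ,
        0 ≤ (m : ℝ) * Real.sin θ + (n : ℝ) * Real.cos θ ∧
        (m : ℝ) * Real.sin θ + (n : ℝ) * Real.cos θ < ε ∧
        ((0 : ℝ), y) = ((m : ℝ) * Real.cos θ - (n : ℝ) * Real.sin θ + t,
          (k : ℝ) + ((a : ℝ) * Real.cos θ - (b : ℝ) * Real.sin θ) / d * t)}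
      = {y : ℝ | ∃ l : ℤ, ∃ t : ℝ, 0 ≤ t ∧ t ≤ ε ∧
          y = ((l : ℝ) + t * ((a : ℝ) * Real.sin θ + (b : ℝ) * Real.cos θ)) / d} := by
  have hdR : (d : ℝ) ≠ 0 := Int.cast_ne_zero.mpr hd
  refine Subset.antisymm (closure_minimal ?_ (isClosed_setOf_int_add_mul_div _ ε hdR)) ?_
  · rintro y ⟨m, n, k, t, h0, h1, hpair⟩
    obtain ⟨ht, rfl⟩ := Prod.mk.inj hpair
    refine ⟨k * d - m * a - n * b, _, h0, h1.le, ?_⟩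
    rw [show t = n * sin θ - m * cos θ by linarith, add_div_mul_eq_trace θ a b hdR]
  rintro _ ⟨l, t, ht0, htε, rfl⟩
  set T := Ioo 0 ε ∩
    {u : ℝ | ∃ m n k : ℤ, k * d - m * a - n * b = l ∧ u = m * sin θ + n * cos θ}
  have hT : Icc 0 ε ⊆ closure T := by
    rw [← closure_Ioo hε0.ne]
    refine closure_minimal (Dense.open_subset_closure_inter ?_ isOpen_Ioo) isClosed_closure
    exact dense_setOf_mul_sub_sub_eq (tan_eq_sin_div_cos θ ▸ hθ) hd hg l
  refine closure_mono ?_ (image_closure_subset_closure_image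
    (f := fun u : ℝ ↦ (l + u * (a * sin θ + b * cos θ)) / d) (by fun_prop)
    ⟨t, hT ⟨ht0, htε⟩, rfl⟩)
  rintro _ ⟨u, ⟨⟨hu0, huε⟩, m, n, k, hl, rfl⟩, rfl⟩
  refine ⟨m, n, k, n * sin θ - m * cos θ, hu0.le, huε, ?_⟩
  rw [add_div_mul_eq_trace θ a b hdR, hl]
  simp

theorem stmt9 (θ : ℝ) (hθ : Irrational (Real.tan θ)) (a b d : ℤ) (hd : d ≠ 0)
    (hg : Int.gcd a (Int.gcd b d) = 1) (ε : ℝ) (hε0 : 0 < ε)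
    (hε : ε < 1 / |(a : ℝ) * Real.sin θ + (b : ℝ) * Real.cos θ|) :
    closure {y : ℝ | ∃ m n k : ℤ, ∃ t : ℝ,
        0 ≤ (m : ℝ) * Real.sin θ + (n : ℝ) * Real.cos θ ∧
        (m : ℝ) * Real.sin θ + (n : ℝ) * Real.cos θ < ε ∧
        ((0 : ℝ), y) = ((m : ℝ) * Real.cos θ - (n : ℝ) * Real.sin θ + t,
          (k : ℝ) + ((a : ℝ) * Real.cos θ - (b : ℝ) * Real.sin θ) / d * t)}
      = {y : ℝ | ∃ l : ℤ, ∃ t : ℝ, 0 ≤ t ∧ t ≤ ε ∧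
          y = ((l : ℝ) + t * ((a : ℝ) * Real.sin θ + (b : ℝ) * Real.cos θ)) / d} :=
  stmt9_general θ hθ a b d hd hg ε hε0
end

section
/- Let θ ∈ ℝ with tan θ irrational, λ = a·cos θ − b·sin θ with a, b, d relatively prime integers, d ≠ 0, λ* = a·sin θ + b·cos θ, 0 < ε < 1/|λ*|, Λ = Λ_F × ℤ, w = (1, λ/d). Then Λ + wℝ is not dense in ℝ²; in fact its closure is a proper closed subset of ℝ² whose complement is open and nonempty. -/
/-!
The functional `φ (x, y) = d * y - λ * x` is constant along the lines of slope `λ / d`, and on the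
point of `Λ_F × ℤ` with parameters `m, n, k` it equals `(d k - a m - b n) + λ* μ*`, where
`μ* = m sin θ + n cos θ ∈ [0, ε)`: rotating `(a, b)` and `(m, n)` by `θ` preserves their dot product.
Hence `φ` maps the whole set into the closed set `ℤ + [0, λ* ε]`, and since `|λ* ε| < 1` this set
misses `(1 + λ* ε) / 2`. So the closure of the set lies in a closed preimage avoiding
`(0, (1 + λ* ε) / (2 d))`.
-/

open Set Pointwise

lemma Real.isClosed_range_intCast_add_uIcc (v : ℝ) :
    IsClosed (range ((↑) : ℤ → ℝ) + uIcc 0 v) :=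
  Real.isClosed_range_intCast.add_right_of_isCompact isCompact_uIcc

lemma Real.one_add_div_two_notMem_range_intCast_add_uIcc {v : ℝ} (hv : |v| < 1) :
    (1 + v) / 2 ∉ range ((↑) : ℤ → ℝ) + uIcc 0 v := by
  rintro ⟨_, ⟨j, rfl⟩, u, hu, hju⟩
  obtain ⟨hv₁, hv₂⟩ := abs_lt.mp hv
  rw [mem_uIcc] at hu
  rcases le_or_gt j 0 with hj | hj
  · have : (j : ℝ) ≤ 0 := by exact_mod_cast hj
    rcases hu with ⟨-, hu⟩ | ⟨-, hu⟩ <;> linarith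
  · have : (1 : ℝ) ≤ j := by exact_mod_cast hj
    rcases hu with ⟨hu, -⟩ | ⟨hu, -⟩ <;> linarith

lemma Real.rotate_mul_add_rotate_mul (θ a b m n : ℝ) :
    (a * Real.cos θ - b * Real.sin θ) * (m * Real.cos θ - n * Real.sin θ) +
      (a * Real.sin θ + b * Real.cos θ) * (m * Real.sin θ + n * Real.cos θ) = a * m + b * n := by
  linear_combination (a * m + b * n) * Real.sin_sq_add_cos_sq θ

lemma mul_add_div_mul_sub_mul_add (d lam x y t : ℝ) (hd : d ≠ 0) :
    d * (y + lam / d * t) - lam * (x + t) = d * y - lam * x := by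
  field_simp
  ring

lemma Real.mul_sub_mul_mem_range_intCast_add_uIcc (θ ε : ℝ) (a b d m n k : ℤ) (t : ℝ)
    (hd : (d : ℝ) ≠ 0) (h₀ : 0 ≤ (m : ℝ) * Real.sin θ + n * Real.cos θ)
    (hε : (m : ℝ) * Real.sin θ + n * Real.cos θ ≤ ε) :
    d * (k + ((a : ℝ) * Real.cos θ - b * Real.sin θ) / d * t) -
        ((a : ℝ) * Real.cos θ - b * Real.sin θ) * (m * Real.cos θ - n * Real.sin θ + t) ∈
      range ((↑) : ℤ → ℝ) + uIcc 0 (((a : ℝ) * Real.sin θ + b * Real.cos θ) * ε) := by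
  refine ⟨_, ⟨d * k - a * m - b * n, rfl⟩,
    ((a : ℝ) * Real.sin θ + b * Real.cos θ) * (m * Real.sin θ + n * Real.cos θ), ?_, ?_⟩
  · rw [← mul_zero ((a : ℝ) * Real.sin θ + b * Real.cos θ), ← image_const_mul_uIcc]
    exact mem_image_of_mem _ (mem_uIcc_of_le h₀ hε)
  · rw [mul_add_div_mul_sub_mul_add _ _ _ _ _ hd]
    push_cast
    linear_combination Real.rotate_mul_add_rotate_mul θ a b m n

theorem stmt13_general (θ : ℝ) (a b d : ℤ) (hd : d ≠ 0)
    (ε : ℝ) (hε0 : 0 < ε)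
    (hε : ε < 1 / |(a : ℝ) * Real.sin θ + (b : ℝ) * Real.cos θ|) :
    let L : Set (ℝ × ℝ) := {p | ∃ m n k : ℤ, ∃ t : ℝ,
      0 ≤ (m : ℝ) * Real.sin θ + (n : ℝ) * Real.cos θ ∧
      (m : ℝ) * Real.sin θ + (n : ℝ) * Real.cos θ < ε ∧
      p = ((m : ℝ) * Real.cos θ - (n : ℝ) * Real.sin θ + t,
        (k : ℝ) + ((a : ℝ) * Real.cos θ - (b : ℝ) * Real.sin θ) / d * t)}
    ¬ Dense L ∧ IsOpen (closure L)ᶜ ∧ ((closure L)ᶜ).Nonempty := by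
  intro L
  set lam := (a : ℝ) * Real.cos θ - (b : ℝ) * Real.sin θ
  set lamStar := (a : ℝ) * Real.sin θ + (b : ℝ) * Real.cos θ
  have hd' : (d : ℝ) ≠ 0 := by exact_mod_cast hd
  have hv : |lamStar * ε| < 1 := by
    rw [abs_mul, abs_of_pos hε0]
    rcases (abs_nonneg lamStar).eq_or_lt with h | h
    · simp [← h]
    · rwa [lt_div_iff₀ h, mul_comm] at hε
  let φ : ℝ × ℝ → ℝ := fun p => d * p.2 - lam * p.1
  have hLS : L ⊆ φ ⁻¹' (range ((↑) : ℤ → ℝ) + uIcc 0 (lamStar * ε)) := by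
    rintro _ ⟨m, n, k, t, h₀, hε', rfl⟩
    exact Real.mul_sub_mul_mem_range_intCast_add_uIcc θ ε a b d m n k t hd' h₀ hε'.le
  set p : ℝ × ℝ := (0, (1 + lamStar * ε) / (2 * d))
  have hφp : φ p = (1 + lamStar * ε) / 2 := by
    simp only [φ, p]
    field_simp
    ring
  have hp : p ∉ closure L := fun hp =>
    Real.one_add_div_two_notMem_range_intCast_add_uIcc hv <| hφp ▸
      closure_minimal hLS ((Real.isClosed_range_intCast_add_uIcc _).preimage (by fun_prop)) hp
  exact ⟨fun h => hp (h p), isClosed_closure.isOpen_compl, p, hp⟩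

theorem stmt13 (θ : ℝ) (hθ : Irrational (Real.tan θ)) (a b d : ℤ) (hd : d ≠ 0)
    (hg : Int.gcd a (Int.gcd b d) = 1) (ε : ℝ) (hε0 : 0 < ε)
    (hε : ε < 1 / |(a : ℝ) * Real.sin θ + (b : ℝ) * Real.cos θ|) :
    let L : Set (ℝ × ℝ) := {p | ∃ m n k : ℤ, ∃ t : ℝ,
      0 ≤ (m : ℝ) * Real.sin θ + (n : ℝ) * Real.cos θ ∧
      (m : ℝ) * Real.sin θ + (n : ℝ) * Real.cos θ < ε ∧
      p = ((m : ℝ) * Real.cos θ - (n : ℝ) * Real.sin θ + t,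
        (k : ℝ) + ((a : ℝ) * Real.cos θ - (b : ℝ) * Real.sin θ) / d * t)}
    ¬ Dense L ∧ IsOpen (closure L)ᶜ ∧ ((closure L)ᶜ).Nonempty :=
  stmt13_general θ a b d hd ε hε0 hε
end

section
/- Let θ ∈ ℝ with tan θ irrational, ε > 0, and Λ_F the cut-and-project set with window [0, ε). For any real s, if the set L = (Λ_F × ℤ) + (1, s)·ℝ is not dense in ℝ², then s ∈ ℚ·cos θ + ℚ·sin θ. -/
/-!
Let `Γ` be the subgroup of `ℝ²` of the points `(m sin θ + n cos θ, k - s (m cos θ - n sin θ))`.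
Since the lines of `L` all have slope `s`, `L` is dense as soon as `Γ` is. As `tan θ` is
irrational, `Γ` has infinitely many points in a bounded set, so `0` is an accumulation point of
`Γ` and a limiting direction `d` of its short vectors spans a line contained in its closure.
Projecting along `d`, the closure of `Γ` is everything unless the linear form vanishing on `d` maps
`Γ` into a cyclic group `rℤ`; evaluated on the generators of `Γ`, this forces
`s ∈ ℚ cos θ + ℚ sin θ`.
-/

open Filter Topology Set

section NormedGroup

variable {E : Type*} [NormedAddCommGroup E]

theorem accPt_zero_of_injective_of_norm_le [ProperSpace E] (G : AddSubgroup E)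
    {f : ℕ → E} (hf : Function.Injective f) (hfG : ∀ n, f n ∈ G) {R : ℝ} (hR : ∀ n, ‖f n‖ ≤ R) :
    AccPt (0 : E) (𝓟 G) := by
  obtain ⟨x, -, φ, hφ, hlim⟩ := (isCompact_closedBall (0 : E) R).tendsto_subseq
    (fun n => mem_closedBall_zero_iff.2 (hR n))
  have hdiff : Tendsto (fun n => f (φ (n + 1)) - f (φ n)) atTop (𝓝 0) := by
    simpa using (hlim.comp (tendsto_add_atTop_nat 1)).sub hlim
  refine accPt_iff_frequently.2 <| mem_closure_iff_frequently.1 <| mem_closure_of_tendsto hdiff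
    (Eventually.of_forall fun n => ⟨?_, G.sub_mem (hfG _) (hfG _)⟩)
  exact sub_ne_zero.2 (hf.ne (hφ.injective.ne n.succ_ne_self))

theorem exists_ne_zero_forall_smul_mem_closure [NormedSpace ℝ E]
    [FiniteDimensional ℝ E] (G : AddSubgroup E) (h : AccPt (0 : E) (𝓟 G)) :
    ∃ d : E, d ≠ 0 ∧ ∀ t : ℝ, t • d ∈ closure (G : Set E) := by
  obtain ⟨g, hg, hg0⟩ :=
    mem_closure_iff_seq_limit.1 (mem_closure_iff_frequently.2 (accPt_iff_frequently.1 h))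
  obtain ⟨d, hd, φ, hφ, hu⟩ := (isCompact_sphere (0 : E) 1).tendsto_subseq
    (x := fun n => ‖g n‖⁻¹ • g n) fun n => by simp [norm_smul, (hg n).1]
  refine ⟨d, ne_zero_of_mem_unit_sphere ⟨d, hd⟩, fun t => ?_⟩
  set c : ℕ → ℝ := fun n => t / ‖g (φ n)‖
  -- `⌊c n⌋ • g (φ n) ∈ G` is within `‖g (φ n)‖` of `t • (‖g (φ n)‖⁻¹ • g (φ n))`.
  have herr : Tendsto (fun n => ((⌊c n⌋ : ℝ) - c n) • g (φ n)) atTop (𝓝 0) := by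
    refine squeeze_zero_norm (fun n => ?_)
      (tendsto_zero_iff_norm_tendsto_zero.1 (hg0.comp hφ.tendsto_atTop))
    rw [norm_smul]
    refine mul_le_of_le_one_left (norm_nonneg _) ?_
    rw [Real.norm_eq_abs, abs_sub_comm, abs_of_nonneg (Int.fract_nonneg _)]
    exact (Int.fract_lt_one _).le
  have hlim : Tendsto (fun n => t • (‖g (φ n)‖⁻¹ • g (φ n)) + ((⌊c n⌋ : ℝ) - c n) • g (φ n))
      atTop (𝓝 (t • d)) := by
    simpa using (hu.const_smul t).add herr
  refine mem_closure_of_tendsto hlim (Eventually.of_forall fun n => ?_)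
  have : t • (‖g (φ n)‖⁻¹ • g (φ n)) + ((⌊c n⌋ : ℝ) - c n) • g (φ n) = ⌊c n⌋ • g (φ n) := by
    rw [← Int.cast_smul_eq_zsmul ℝ, smul_smul, ← add_smul]
    simp [c, div_eq_mul_inv]
  simpa [this] using G.zsmul_mem (hg (φ n)).2 _

end NormedGroup

theorem dense_of_dense_image_of_ker_subset_closure {M F 𝓕 : Type*} [AddCommGroup M]
    [TopologicalSpace M] [IsTopologicalAddGroup M] [AddGroup F] [TopologicalSpace F]
    [FunLike 𝓕 M F] [AddMonoidHomClass 𝓕 M F] (G : AddSubgroup M) (ℓ : 𝓕) (hℓ : IsOpenMap ℓ)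
    (hker : ∀ x, ℓ x = 0 → x ∈ closure (G : Set M)) (hG : Dense (ℓ '' G)) :
    Dense (G : Set M) := by
  refine dense_closure.1 ((hG.preimage hℓ).mono ?_)
  rintro x ⟨g, hg, hgx⟩
  have hxg : x - g ∈ G.topologicalClosure := by
    rw [← SetLike.mem_coe, AddSubgroup.topologicalClosure_coe]
    exact hker (x - g) (by rw [map_sub, hgx, sub_self])
  have hx := G.topologicalClosure.add_mem hxg (G.le_topologicalClosure hg)
  rwa [sub_add_cancel, ← SetLike.mem_coe, AddSubgroup.topologicalClosure_coe] at hx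

theorem exists_forall_mem_zmultiples_of_not_dense (G : AddSubgroup (ℝ × ℝ))
    (h0 : AccPt (0 : ℝ × ℝ) (𝓟 G)) (hG : ¬ Dense (G : Set (ℝ × ℝ))) :
    ∃ A B : ℝ, (A, B) ≠ 0 ∧ ∃ r : ℝ, ∀ x ∈ G, A * x.1 + B * x.2 ∈ AddSubgroup.zmultiples r := by
  obtain ⟨d, hd, hline⟩ := exists_ne_zero_forall_smul_mem_closure G h0
  have hN : d.1 ^ 2 + d.2 ^ 2 ≠ 0 := by
    contrapose! hd
    ext <;> simp <;> nlinarith [sq_nonneg d.1, sq_nonneg d.2]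
  let ℓ : ℝ × ℝ →L[ℝ] ℝ :=
    d.2 • ContinuousLinearMap.fst ℝ ℝ ℝ + (-d.1) • ContinuousLinearMap.snd ℝ ℝ ℝ
  have hℓ (x : ℝ × ℝ) : ℓ x = d.2 * x.1 + -d.1 * x.2 := rfl
  have hℓ0 : ℓ ≠ 0 := by
    intro h
    have hval := hℓ (d.2, -d.1)
    rw [h, zero_apply] at hval
    dsimp only at hval
    exact hN (by linear_combination -hval)
  have hker (x : ℝ × ℝ) (hx : ℓ x = 0) : x ∈ closure (G : Set (ℝ × ℝ)) := by
    convert hline ((x.1 * d.1 + x.2 * d.2) / (d.1 ^ 2 + d.2 ^ 2)) using 1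
    rw [hℓ] at hx
    ext <;> simp <;> field_simp
    · linear_combination d.2 * hx
    · linear_combination -d.1 * hx
  rcases (G.map (ℓ : ℝ × ℝ →+ ℝ)).dense_or_cyclic with hdense | ⟨r, hr⟩
  · exact absurd (dense_of_dense_image_of_ker_subset_closure G ℓ (ℓ.isOpenMap_of_ne_zero hℓ0)
      hker (by simpa using hdense)) hG
  · refine ⟨d.2, -d.1, fun h => hd ?_, r, fun x hx => ?_⟩
    · ext <;> simp_all
    · rw [← hℓ, AddSubgroup.zmultiples_eq_closure, ← hr]
      exact AddSubgroup.mem_map_of_mem _ hx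

open Real

section CutAndProject

variable {θ : ℝ}

theorem cos_ne_zero_of_irrational_tan (hθ : Irrational (tan θ)) : cos θ ≠ 0 :=
  fun h => hθ.ne_zero (by rw [tan_eq_sin_div_cos, h, div_zero])

theorem eq_zero_of_intCast_mul_sin_add_intCast_mul_cos_eq_zero (hθ : Irrational (tan θ))
    {m n : ℤ} (h : m * sin θ + n * cos θ = 0) : m = 0 ∧ n = 0 := by
  have hcos := cos_ne_zero_of_irrational_tan hθ
  have htan : m * tan θ + n = 0 := by
    rw [tan_eq_sin_div_cos]
    field_simp
    linear_combination h
  have hm : m = 0 := by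
    by_contra hm
    exact ((hθ.intCast_mul hm).add_intCast n).ne_zero htan
  exact ⟨hm, by simpa [hm] using htan⟩

/-- The image of `(m, n, k)` records the window coordinate of `(m, n)` and the height at which the
line through `(m cos θ - n sin θ, k)` with direction `(1, s)` crosses the vertical axis. -/
noncomputable def interceptHom (θ s : ℝ) : ℤ × ℤ × ℤ →+ ℝ × ℝ :=
  AddMonoidHom.mk'
    (fun v => (v.1 * sin θ + v.2.1 * cos θ, v.2.2 - s * (v.1 * cos θ - v.2.1 * sin θ)))
    (fun v w => by ext <;> simp <;> ring)

noncomputable def interceptLattice (θ s : ℝ) : AddSubgroup (ℝ × ℝ) := (interceptHom θ s).range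

theorem accPt_zero_interceptLattice (hθ : Irrational (tan θ)) (s : ℝ) :
    AccPt (0 : ℝ × ℝ) (𝓟 (interceptLattice θ s)) := by
  have hcos := cos_ne_zero_of_irrational_tan hθ
  let f : ℕ → ℝ × ℝ := fun m =>
    interceptHom θ s (m, -⌊m * tan θ⌋, ⌊s * (m * cos θ + ⌊m * tan θ⌋ * sin θ)⌋)
  have hf1 (m : ℕ) : (f m).1 = cos θ * Int.fract (m * tan θ) := by
    simp only [f, interceptHom, AddMonoidHom.mk'_apply, Int.fract, tan_eq_sin_div_cos]
    push_cast
    field_simp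
    ring
  have hf2 (m : ℕ) : (f m).2 = -Int.fract (s * (m * cos θ + ⌊m * tan θ⌋ * sin θ)) := by
    simp only [f, interceptHom, AddMonoidHom.mk'_apply, Int.fract]
    push_cast
    ring
  refine accPt_zero_of_injective_of_norm_le _ (f := f) (R := 1) (fun m m' h => ?_)
    (fun m => ⟨_, rfl⟩) (fun m => ?_)
  · have h1 := congrArg Prod.fst h
    simp only [f, interceptHom, AddMonoidHom.mk'_apply] at h1
    push_cast at h1
    have := eq_zero_of_intCast_mul_sin_add_intCast_mul_cos_eq_zero hθ
      (m := (m : ℤ) - m') (n := ⌊m' * tan θ⌋ - ⌊m * tan θ⌋) (by push_cast; linear_combination h1)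
    omega
  · rw [Prod.norm_def, hf1, hf2, Real.norm_eq_abs, Real.norm_eq_abs, abs_neg, abs_mul,
      Int.abs_fract, Int.abs_fract]
    exact max_le (mul_le_one₀ (abs_cos_le_one θ) (Int.fract_nonneg _) (Int.fract_lt_one _).le)
      (Int.fract_lt_one _).le

theorem dense_lines_of_dense_interceptLattice {ε s : ℝ} (hε : 0 < ε)
    (h : Dense (interceptLattice θ s : Set (ℝ × ℝ))) :
    Dense {p : ℝ × ℝ | ∃ m n k : ℤ, ∃ t : ℝ,
      0 ≤ (m : ℝ) * sin θ + (n : ℝ) * cos θ ∧ (m : ℝ) * sin θ + (n : ℝ) * cos θ < ε ∧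
      p = ((m : ℝ) * cos θ - (n : ℝ) * sin θ + t, (k : ℝ) + s * t)} := by
  let F : ℝ × ℝ →L[ℝ] ℝ := ContinuousLinearMap.snd ℝ ℝ ℝ - s • ContinuousLinearMap.fst ℝ ℝ ℝ
  have hF0 : F ≠ 0 := fun hF => by simpa [F] using congrArg (· (0, 1)) hF
  have hintercepts :
      Dense (Prod.snd '' ((interceptLattice θ s : Set (ℝ × ℝ)) ∩ Ioo 0 ε ×ˢ univ)) := by
    refine dense_iff_inter_open.2 fun U hU ⟨y, hy⟩ => ?_
    obtain ⟨p, ⟨hpε, hpU⟩, hpΓ⟩ := h.inter_open_nonempty (Ioo 0 ε ×ˢ U) (isOpen_Ioo.prod hU)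
      ⟨(ε / 2, y), ⟨by constructor <;> linarith, hy⟩⟩
    exact ⟨p.2, hpU, p, ⟨hpΓ, hpε, trivial⟩, rfl⟩
  refine (hintercepts.preimage (F.isOpenMap_of_ne_zero hF0)).mono ?_
  rintro p ⟨-, ⟨⟨⟨m, n, k⟩, rfl⟩, ⟨h0, hε⟩, -⟩, hp⟩
  simp only [interceptHom, AddMonoidHom.mk'_apply] at h0 hε hp
  refine ⟨m, n, k, p.1 - (m * cos θ - n * sin θ), h0.le, hε, ?_⟩
  simp only [F, sub_apply, smul_apply,
    ContinuousLinearMap.coe_fst', ContinuousLinearMap.coe_snd', smul_eq_mul] at hp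
  ext
  · ring
  · linear_combination -hp

theorem exists_rat_eq_of_forall_mem_zmultiples (hθ : Irrational (tan θ)) {s A B r : ℝ}
    (hAB : (A, B) ≠ 0)
    (h : ∀ x ∈ interceptLattice θ s, A * x.1 + B * x.2 ∈ AddSubgroup.zmultiples r) :
    ∃ p q : ℚ, s = p * cos θ + q * sin θ := by
  have hcos := cos_ne_zero_of_irrational_tan hθ
  obtain ⟨i, hi⟩ := AddSubgroup.mem_zmultiples_iff.1 (h _ ⟨(1, 0, 0), rfl⟩)
  obtain ⟨j, hj⟩ := AddSubgroup.mem_zmultiples_iff.1 (h _ ⟨(0, 1, 0), rfl⟩)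
  obtain ⟨k, hk⟩ := AddSubgroup.mem_zmultiples_iff.1 (h _ ⟨(0, 0, 1), rfl⟩)
  simp only [zsmul_eq_mul, interceptHom, AddMonoidHom.mk'_apply, Int.cast_one, one_mul,
    Int.cast_zero, zero_mul, add_zero, sub_zero, zero_sub, mul_neg, zero_add, sub_neg_eq_add,
    sub_self, mul_zero, mul_one] at hi hj hk
  rcases eq_or_ne B 0 with rfl | hB
  · have hA : A ≠ 0 := fun hA => hAB (by simp [hA])
    have hrel : (j : ℝ) * sin θ + ((-i : ℤ) : ℝ) * cos θ = 0 := by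
      refine (mul_right_inj' hA).1 ?_
      push_cast
      linear_combination -(j : ℝ) * hi + (i : ℝ) * hj
    obtain ⟨rfl, -⟩ := eq_zero_of_intCast_mul_sin_add_intCast_mul_cos_eq_zero hθ hrel
    exact absurd (by linear_combination -hj) (mul_ne_zero hA hcos)
  · have hk0 : (k : ℝ) ≠ 0 := left_ne_zero_of_mul (hk ▸ hB)
    have hr0 : r ≠ 0 := right_ne_zero_of_mul (hk ▸ hB)
    refine ⟨-i / k, j / k, (mul_right_inj' (mul_ne_zero hk0 hr0)).1 ?_⟩
    rw [show ((k : ℝ) * r) * ((((-i / k : ℚ)) : ℝ) * cos θ + ((j / k : ℚ) : ℝ) * sin θ)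
      = r * (j * sin θ - i * cos θ) by push_cast; field_simp; ring]
    linear_combination s * hk - sin θ * hj + cos θ * hi - B * s * sin_sq_add_cos_sq θ

end CutAndProject

theorem stmt17 (θ : ℝ) (hθ : Irrational (Real.tan θ)) (ε : ℝ) (hε : 0 < ε) (s : ℝ)
    (hL : ¬ Dense {p : ℝ × ℝ | ∃ m n k : ℤ, ∃ t : ℝ,
      0 ≤ (m : ℝ) * Real.sin θ + (n : ℝ) * Real.cos θ ∧
      (m : ℝ) * Real.sin θ + (n : ℝ) * Real.cos θ < ε ∧
      p = ((m : ℝ) * Real.cos θ - (n : ℝ) * Real.sin θ + t, (k : ℝ) + s * t)}) :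
    ∃ p q : ℚ, s = (p : ℝ) * Real.cos θ + (q : ℝ) * Real.sin θ := by
  have hΓ : ¬ Dense (interceptLattice θ s : Set (ℝ × ℝ)) :=
    fun h => hL (dense_lines_of_dense_interceptLattice hε h)
  obtain ⟨A, B, hAB, r, hr⟩ :=
    exists_forall_mem_zmultiples_of_not_dense _ (accPt_zero_interceptLattice hθ s) hΓ
  exact exists_rat_eq_of_forall_mem_zmultiples hθ hAB hr
end
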